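/- Let H be a finite-dimensional Hopf algebra with bijective antipode S and a faithful left integral φ (faithful meaning a·φ = 0 implies a = 0 and φ·a = 0 implies a = 0). Define ψ̂ : H* → k by ψ̂(a·φ) := ε(a). Then for all a, b ∈ H, ψ̂ of the convolution product (a·φ)(b·φ) equals φ(S⁻¹(b)a), where the convolution product in H* is (υω)(c) = Σ υ(c₍₁₎)ω(c₍₂₎) and (a·φ)(c) = φ(ca). -/

import Mathlib

/-! Write `Δb = Σ b₁ ⊗ b₂` and `T = S⁻¹`. As `T` is anti-multiplicative, `Σ b₂ T(b₁) = ε(b) 1`,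
and coassociativity upgrades this to `Σ Δ(b₂) (T(b₁) ⊗ 1) = 1 ⊗ b`. Multiplying `Δc` by this and
using left invariance `(id ⊗ φ) Δx = φ(x) 1` at `x = c b₂` gives `Σ c₁ φ(c₂ b) = Σ φ(c b₂) T(b₁)`,
that is `(a·φ)(b·φ) = Σ φ(T(b₁) a) (b₂·φ)`. Applying `ψ̂` and counitality leaves `φ(T(b) a)`. -/

open TensorProduct

/-- The convolution product of two functionals on a coalgebra:
`(υω)(c) = Σ υ(c₍₁₎) ω(c₍₂₎)`. -/
noncomputable def convF (k H : Type*) [CommRing k] [AddCommGroup H] [Module k H]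
    [Coalgebra k H] (υ ω : H →ₗ[k] k) : H →ₗ[k] k :=
  (TensorProduct.lid k k).toLinearMap ∘ₗ (TensorProduct.map υ ω) ∘ₗ Coalgebra.comul

section

variable {k H : Type*}

lemma convF_apply [CommRing k] [AddCommGroup H] [Module k H] [Coalgebra k H] {c : H}
    {ι : Type*} (r : Coalgebra.Repr k c ι) (υ ω : H →ₗ[k] k) :
    convF k H υ ω c = ∑ i ∈ r.index, υ (r.left i) * ω (r.right i) := by
  simp [convF, ← r.eq]

lemma Coalgebra.sum_counit_right_smul [CommSemiring k] [AddCommMonoid H] [Module k H]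
    [Coalgebra k H] {c : H} {ι : Type*} (r : Coalgebra.Repr k c ι) :
    ∑ i ∈ r.index, Coalgebra.counit (R := k) (r.right i) • r.left i = c := by
  have h := congrArg (_root_.TensorProduct.rid k H) (sum_tmul_counit_eq r)
  simpa only [map_sum, _root_.TensorProduct.rid_tmul, one_smul] using h

lemma rid_lTensor_mul_tmul_one [CommSemiring k] [Semiring H] [Algebra k H] (φ : H →ₗ[k] k)
    (X : H ⊗[k] H) (y : H) :
    TensorProduct.rid k H (φ.lTensor H (X * (y ⊗ₜ 1))) =
      TensorProduct.rid k H (φ.lTensor H X) * y := by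
  induction X using TensorProduct.induction_on with
  | zero => simp
  | tmul x z => simp [Algebra.TensorProduct.tmul_mul_tmul]
  | add X Y hX hY => simp only [add_mul, map_add, hX, hY]

end

namespace HopfAlgebra

variable {k H : Type*}

section Semiring

variable [CommSemiring k] [Semiring H] [HopfAlgebra k H]

def IsLeftIntegral (φ : H →ₗ[k] k) : Prop :=
  ∀ a : H, TensorProduct.rid k H (φ.lTensor H (Coalgebra.comul a)) = φ a • 1

variable {T : H →ₗ[k] H} (hST : ∀ x, antipode k (T x) = x) (hTS : ∀ x, T (antipode k x) = x)
include hST hTS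

lemma map_mul_of_inverse_antipode (x y : H) : T (x * y) = T y * T x := by
  conv_lhs => rw [← hST x, ← hST y, ← antipode_mul_antidistrib, hTS]

lemma sum_right_mul_inverse_antipode_left {b : H} {ι : Type*} (r : Coalgebra.Repr k b ι) :
    ∑ i ∈ r.index, r.right i * T (r.left i) = Coalgebra.counit (R := k) b • 1 := by
  have hT1 : T 1 = 1 := by simpa using hTS 1
  have h := congr(T $(sum_mul_antipode_eq_smul r))
  simpa [map_sum, map_mul_of_inverse_antipode hST hTS, hTS, hT1] using h

lemma sum_comul_right_mul_inverse_antipode_left_tmul_one {b : H} {ι : Type*}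
    (r : Coalgebra.Repr k b ι) :
    ∑ i ∈ r.index, Coalgebra.comul (r.right i) * (T (r.left i) ⊗ₜ[k] (1 : H)) = 1 ⊗ₜ b := by
  let Ψ : H ⊗[k] (H ⊗[k] H) →ₗ[k] H ⊗[k] H :=
    TensorProduct.lift (LinearMap.rTensorHom H ∘ₗ (LinearMap.mul k H).flip ∘ₗ T)
  have hΨ : ∀ x y z : H, Ψ (x ⊗ₜ (y ⊗ₜ z)) = (y * T x) ⊗ₜ z := by simp [Ψ]
  have h := congrArg Ψ <| Coalgebra.sum_tmul_tmul_eq r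
    (fun i ↦ Coalgebra.Repr.arbitrary k (r.left i))
    (fun i ↦ Coalgebra.Repr.arbitrary k (r.right i))
  simp only [map_sum, hΨ, ← TensorProduct.sum_tmul,
    sum_right_mul_inverse_antipode_left hST hTS] at h
  simp only [TensorProduct.smul_tmul, ← TensorProduct.tmul_sum,
    Coalgebra.sum_counit_smul] at h
  rw [h]
  refine Finset.sum_congr rfl fun i _ ↦ ?_
  rw [← (Coalgebra.Repr.arbitrary k (r.right i)).eq, Finset.sum_mul]
  simp [Algebra.TensorProduct.tmul_mul_tmul]

lemma IsLeftIntegral.sum_smul_left_eq_sum_smul_inverse_antipode {φ : H →ₗ[k] k}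
    (hφ : IsLeftIntegral φ) {b c : H} {ι κ : Type*} (r : Coalgebra.Repr k c ι)
    (s : Coalgebra.Repr k b κ) :
    ∑ i ∈ r.index, φ (r.right i * b) • r.left i =
      ∑ j ∈ s.index, φ (c * s.right j) • T (s.left j) :=
  calc ∑ i ∈ r.index, φ (r.right i * b) • r.left i
      = TensorProduct.rid k H (φ.lTensor H (Coalgebra.comul c * (1 ⊗ₜ b))) := by
        simp [← r.eq, Finset.sum_mul, Algebra.TensorProduct.tmul_mul_tmul]
    _ = TensorProduct.rid k H (φ.lTensor H (Coalgebra.comul c *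
          ∑ j ∈ s.index, Coalgebra.comul (s.right j) * (T (s.left j) ⊗ₜ[k] (1 : H)))) := by
        rw [sum_comul_right_mul_inverse_antipode_left_tmul_one hST hTS]
    _ = ∑ j ∈ s.index, φ (c * s.right j) • T (s.left j) := by
        simp only [Finset.mul_sum, map_sum, ← mul_assoc, ← Bialgebra.comul_mul,
          rid_lTensor_mul_tmul_one, hφ _, smul_mul_assoc, one_mul]

end Semiring

variable [CommRing k] [Ring H] [HopfAlgebra k H]
  {T : H →ₗ[k] H} (hST : ∀ x, antipode k (T x) = x) (hTS : ∀ x, T (antipode k x) = x)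
include hST hTS

lemma IsLeftIntegral.convF_comp_mulRight {φ : H →ₗ[k] k} (hφ : IsLeftIntegral φ) (a b : H)
    {κ : Type*} (s : Coalgebra.Repr k b κ) :
    convF k H (φ ∘ₗ LinearMap.mulRight k a) (φ ∘ₗ LinearMap.mulRight k b) =
      ∑ j ∈ s.index, φ (T (s.left j) * a) • (φ ∘ₗ LinearMap.mulRight k (s.right j)) := by
  ext c
  have h := congrArg (fun x ↦ φ (x * a))
    (hφ.sum_smul_left_eq_sum_smul_inverse_antipode hST hTS (Coalgebra.Repr.arbitrary k c) s)
  simp only [Finset.sum_mul, smul_mul_assoc, map_sum, map_smul, smul_eq_mul] at h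
  simpa [convF_apply (Coalgebra.Repr.arbitrary k c), mul_comm] using h

end HopfAlgebra

theorem stmt_10_general (k H : Type*) [Field k] [Ring H] [HopfAlgebra k H]
    (Sinv : H →ₗ[k] H)
    (hS1 : ∀ x : H, HopfAlgebra.antipode (R := k) (Sinv x) = x)
    (hS2 : ∀ x : H, Sinv (HopfAlgebra.antipode (R := k) x) = x)
    (φ : H →ₗ[k] k)
    (hint : ∀ a : H,
      (TensorProduct.rid k H) (LinearMap.lTensor H φ (Coalgebra.comul a)) = φ a • (1 : H))
    (ψhat : Module.Dual k (Module.Dual k H))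
    (hψhat : ∀ a : H, ψhat (φ ∘ₗ LinearMap.mulRight k a) = Coalgebra.counit (R := k) a) :
    ∀ a b : H,
      ψhat (convF k H (φ ∘ₗ LinearMap.mulRight k a) (φ ∘ₗ LinearMap.mulRight k b))
        = φ (Sinv b * a) := by
  intro a b
  let s := Coalgebra.Repr.arbitrary k b
  have hφ : HopfAlgebra.IsLeftIntegral φ := hint
  rw [hφ.convF_comp_mulRight hS1 hS2 a b s, map_sum]
  conv_rhs => rw [← Coalgebra.sum_counit_right_smul s]
  simp [map_sum, Finset.sum_mul, hψhat, mul_comm]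

/-- For a finite-dimensional Hopf algebra with bijective antipode and faithful left
integral `φ`, the functional `ψ̂` with `ψ̂(a·φ) = ε(a)` satisfies
`ψ̂((a·φ)(b·φ)) = φ(S⁻¹(b) a)`. -/
theorem stmt_10 (k H : Type*) [Field k] [Ring H] [HopfAlgebra k H] [FiniteDimensional k H]
    (Sinv : H →ₗ[k] H)
    (hS1 : ∀ x : H, HopfAlgebra.antipode (R := k) (Sinv x) = x)
    (hS2 : ∀ x : H, Sinv (HopfAlgebra.antipode (R := k) x) = x)
    (φ : H →ₗ[k] k)
    (hint : ∀ a : H,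
      (TensorProduct.rid k H) (LinearMap.lTensor H φ (Coalgebra.comul a)) = φ a • (1 : H))
    (hfaith1 : ∀ a : H, φ ∘ₗ LinearMap.mulRight k a = 0 → a = 0)
    (hfaith2 : ∀ a : H, φ ∘ₗ LinearMap.mulLeft k a = 0 → a = 0)
    (ψhat : Module.Dual k (Module.Dual k H))
    (hψhat : ∀ a : H, ψhat (φ ∘ₗ LinearMap.mulRight k a) = Coalgebra.counit (R := k) a) :
    ∀ a b : H,
      ψhat (convF k H (φ ∘ₗ LinearMap.mulRight k a) (φ ∘ₗ LinearMap.mulRight k b))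
        = φ (Sinv b * a) :=
  stmt_10_general k H Sinv hS1 hS2 φ hint ψhat hψhat
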